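/- Let A_1, ..., A_L be M×M Hermitian matrices and B = A_1 + ... + A_L. Let α_{l,1} ≥ ... ≥ α_{l,M} be the eigenvalues of A_l in decreasing order and β_1 ≥ ... ≥ β_M the eigenvalues of B in decreasing order. Then for every index s with 1 ≤ s ≤ M, β_s ≤ Σ_{l=1}^{L} α_{l, ⌊(s−1)/L⌋ + 1}. -/

import Mathlib

open Module Submodule Finset
open scoped ComplexInnerProductSpace

section Helpers

variable {M : ℕ}

local notation "E" M => EuclideanSpace ℂ (Fin M)

/-- Dimension count for an intersection of finitely many subspaces. -/
private lemma aux_finrank_inf {V : Type*} [AddCommGroup V] [Module ℂ V]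
    [FiniteDimensional ℂ V] {ι : Type*} [DecidableEq ι] (t : Finset ι)
    (p : ι → Submodule ℂ V) :
    (∑ i ∈ t, finrank ℂ (p i)) + finrank ℂ V ≤
      finrank ℂ ↥(⨅ i ∈ t, p i) + t.card * finrank ℂ V := by
  induction t using Finset.induction_on with
  | empty =>
    rw [show (⨅ i ∈ (∅ : Finset ι), p i) = ⊤ by simp]
    simp [finrank_top]
  | @insert a t ha ih =>
    rw [Finset.sum_insert ha, Finset.iInf_insert, Finset.card_insert_of_notMem ha]
    rw [add_one_mul]
    have h1 := Submodule.finrank_sup_add_finrank_inf_eq (p a) (⨅ i ∈ t, p i)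
    have h2 : finrank ℂ ↥(p a ⊔ ⨅ i ∈ t, p i) ≤ finrank ℂ V :=
      Submodule.finrank_le _
    have h3 : finrank ℂ (p a) ≤ finrank ℂ V := Submodule.finrank_le _
    omega

/-- Coordinates outside `S` of a vector in the span of basis vectors from `S` vanish. -/
private lemma aux_repr_zero (b : OrthonormalBasis (Fin M) ℂ (E M))
    (S : Set (Fin M)) {x : E M} (hx : x ∈ span ℂ (b '' S)) {j : Fin M} (hj : j ∉ S) :
    b.repr x j = 0 := by
  induction hx using Submodule.span_induction with
  | mem y hy =>
    obtain ⟨i, hi, rfl⟩ := hy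
    rw [b.repr_self, EuclideanSpace.single_apply, if_neg]
    rintro rfl; exact hj hi
  | zero => simp
  | add u v hu hv ihu ihv => simp [ihu, ihv]
  | smul c u hu ihu => simp [ihu]

private lemma aux_finrank_span (b : OrthonormalBasis (Fin M) ℂ (E M))
    (S : Finset (Fin M)) :
    finrank ℂ ↥(span ℂ (b '' (S : Set (Fin M)))) = S.card := by
  have hli : LinearIndependent ℂ (fun i : ((S : Set (Fin M))) => b ↑i) :=
    b.orthonormal.linearIndependent.comp _ Subtype.val_injective
  have h := finrank_span_eq_card hli
  rw [← Set.image_eq_range] at h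
  rw [h]
  simp

/-- Parseval. -/
private lemma aux_parseval (b : OrthonormalBasis (Fin M) ℂ (E M)) (x : E M) :
    ∑ i, ‖b.repr x i‖ ^ 2 = ‖x‖ ^ 2 := by
  have h : (⟪x, x⟫) = ∑ i, (starRingEnd ℂ) (b.repr x i) * b.repr x i := by
    rw [← b.repr.inner_map_map x x, PiLp.inner_apply]; simp only [RCLike.inner_apply']
  rw [inner_self_eq_norm_sq_to_K,
    Finset.sum_congr rfl (fun i _ => RCLike.conj_mul (b.repr x i))] at h
  exact_mod_cast h.symm

/-- Quadratic form of a symmetric map diagonal in an orthonormal basis. -/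
private lemma aux_quad {T : (E M) →ₗ[ℂ] (E M)} (hT : T.IsSymmetric)
    (b : OrthonormalBasis (Fin M) ℂ (E M)) (μ : Fin M → ℝ)
    (h : ∀ i, T (b i) = ((μ i : ℝ) : ℂ) • b i) (x : E M) :
    ⟪x, T x⟫ = ((∑ i, μ i * ‖b.repr x i‖ ^ 2 : ℝ) : ℂ) := by
  have hr : ∀ i, b.repr (T x) i = ((μ i : ℝ) : ℂ) * b.repr x i := by
    intro i
    rw [OrthonormalBasis.repr_apply_apply, ← hT (b i) x, h, inner_smul_left,
      OrthonormalBasis.repr_apply_apply, Complex.conj_ofReal]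
  have h1 : (⟪x, T x⟫) = ∑ i, (starRingEnd ℂ) (b.repr x i) * b.repr (T x) i := by
    rw [← b.repr.inner_map_map x (T x), PiLp.inner_apply]; simp only [RCLike.inner_apply']
  rw [h1, Finset.sum_congr rfl (fun i _ => by
    rw [hr i, mul_left_comm, RCLike.conj_mul,
      show (RCLike.ofReal ‖b.repr x i‖ : ℂ) = Complex.ofReal ‖b.repr x i‖ from rfl,
      ← Complex.ofReal_pow] :
    ∀ i ∈ Finset.univ, (starRingEnd ℂ) (b.repr x i) * b.repr (T x) i
      = ((μ i : ℝ) : ℂ) * ((‖b.repr x i‖ ^ 2 : ℝ) : ℂ))]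
  push_cast
  rfl

end Helpers

/-- Iterated Weyl eigenvalue inequality. `α l` lists the eigenvalues of `A l` in
decreasing order, `β` lists the eigenvalues of `B = ∑ l, A l` in decreasing order.
Indices are zero-based, so the one-based claim `β_s ≤ ∑_l α_{l, ⌊(s-1)/L⌋+1}`
becomes `β s ≤ ∑ l, α l (s / L)`. -/
theorem iterated_weyl_inequality (L M : ℕ) (hL : 1 ≤ L)
    (A : Fin L → Matrix (Fin M) (Fin M) ℂ)
    (hA : ∀ l, (A l).IsHermitian)
    (hB : (∑ l, A l).IsHermitian)
    (α : Fin L → Fin M → ℝ) (β : Fin M → ℝ)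
    (hαeig : ∀ l, ∃ σ : Equiv.Perm (Fin M), α l = (hA l).eigenvalues ∘ σ)
    (hαmono : ∀ l, Antitone (α l))
    (hβeig : ∃ σ : Equiv.Perm (Fin M), β = hB.eigenvalues ∘ σ)
    (hβmono : Antitone β)
    (s : Fin M) :
    β s ≤ ∑ l, α l ⟨(s : ℕ) / L, lt_of_le_of_lt (Nat.div_le_self _ _) s.isLt⟩ := by
  classical
  set k : Fin M := ⟨(s : ℕ) / L, lt_of_le_of_lt (Nat.div_le_self _ _) s.isLt⟩ with hk
  choose σ hσ using hαeig
  obtain ⟨τ, hτ⟩ := hβeig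
  -- Reordered eigenbases
  set e : (l : Fin L) → OrthonormalBasis (Fin M) ℂ (EuclideanSpace ℂ (Fin M)) :=
    fun l => (hA l).eigenvectorBasis.reindex (σ l).symm with he_def
  set f : OrthonormalBasis (Fin M) ℂ (EuclideanSpace ℂ (Fin M)) :=
    hB.eigenvectorBasis.reindex τ.symm with hf_def
  have heeq : ∀ l i, e l i = (hA l).eigenvectorBasis (σ l i) := by
    intro l i; simp [he_def, OrthonormalBasis.reindex_apply]
  have hfeq : ∀ i, f i = hB.eigenvectorBasis (τ i) := by
    intro i; simp [hf_def, OrthonormalBasis.reindex_apply]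
  -- Eigen equations
  have key : ∀ (C : Matrix (Fin M) (Fin M) ℂ) (hC : C.IsHermitian) (i : Fin M),
      Matrix.toEuclideanLin C (hC.eigenvectorBasis i) =
        ((hC.eigenvalues i : ℝ) : ℂ) • hC.eigenvectorBasis i := by
    intro C hC i
    have h1 := hC.mulVec_eigenvectorBasis i
    ext j
    have := congrFun h1 j
    simpa [Matrix.toEuclideanLin_apply, Complex.real_smul] using this
  have heig : ∀ l i, Matrix.toEuclideanLin (A l) (e l i) = ((α l i : ℝ) : ℂ) • e l i := by
    intro l i
    rw [heeq, hσ l]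
    exact key _ _ _
  have hbig : ∀ i, Matrix.toEuclideanLin (∑ l, A l) (f i) = ((β i : ℝ) : ℂ) • f i := by
    intro i
    rw [hfeq, hτ]
    exact key _ _ _
  have hsymA : ∀ l, (Matrix.toEuclideanLin (A l)).IsSymmetric := fun l =>
    Matrix.isHermitian_iff_isSymmetric.1 (hA l)
  have hsymB : (Matrix.toEuclideanLin (∑ l, A l)).IsSymmetric :=
    Matrix.isHermitian_iff_isSymmetric.1 hB
  -- Subspaces
  set V : Fin L → Submodule ℂ (EuclideanSpace ℂ (Fin M)) :=
    fun l => span ℂ (e l '' ((Finset.Ici k : Finset (Fin M)) : Set (Fin M))) with hV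
  set U : Submodule ℂ (EuclideanSpace ℂ (Fin M)) :=
    span ℂ (f '' ((Finset.Iic s : Finset (Fin M)) : Set (Fin M))) with hU
  have hVrank : ∀ l, finrank ℂ (V l) = M - (k : ℕ) := by
    intro l; rw [hV]; rw [aux_finrank_span, Fin.card_Ici]
  have hUrank : finrank ℂ U = (s : ℕ) + 1 := by
    rw [hU, aux_finrank_span, Fin.card_Iic]
  -- Dimension count
  have hdim := aux_finrank_inf (Finset.univ : Finset (Fin L)) V
  rw [finrank_euclideanSpace, Fintype.card_fin, Finset.card_univ, Fintype.card_fin] at hdim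
  simp only [hVrank, Finset.sum_const, Finset.card_univ, Fintype.card_fin, smul_eq_mul] at hdim
  set Q : Submodule ℂ (EuclideanSpace ℂ (Fin M)) := ⨅ l ∈ Finset.univ, V l with hQ
  have hint := Submodule.finrank_sup_add_finrank_inf_eq U Q
  have hsup : finrank ℂ ↥(U ⊔ Q) ≤ M := by
    have := Submodule.finrank_le (U ⊔ Q)
    rwa [finrank_euclideanSpace, Fintype.card_fin] at this
  have hkdiv : L * (k : ℕ) ≤ (s : ℕ) := by
    rw [hk, mul_comm]; exact Nat.div_mul_le_self _ _
  have hkM : (k : ℕ) ≤ M := le_of_lt k.isLt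
  have hMk : L * (M - (k : ℕ)) + L * (k : ℕ) = L * M := by
    rw [← Nat.mul_add, Nat.sub_add_cancel hkM]
  have hsM : (s : ℕ) < M := s.isLt
  have hpos : 1 ≤ finrank ℂ ↥(U ⊓ Q) := by
    rw [hUrank] at hint
    linarith
  -- Get a nonzero vector in the intersection
  have hne : (U ⊓ Q) ≠ ⊥ := by
    intro h
    rw [h, finrank_bot] at hpos; omega
  obtain ⟨x, hx, hx0⟩ := Submodule.exists_mem_ne_zero_of_ne_bot hne
  have hxU : x ∈ U := hx.1
  have hxV : ∀ l, x ∈ V l := by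
    intro l
    have := hx.2
    rw [hQ] at this
    simpa using (Submodule.mem_iInf _).1 ((Submodule.mem_iInf _).1 this l) (Finset.mem_univ l)
  -- Vanishing coordinates
  have hfz : ∀ j, ¬ (j ≤ s) → f.repr x j = 0 := by
    intro j hj
    refine aux_repr_zero f _ hxU ?_
    simp [hj]
  have hez : ∀ l j, ¬ (k ≤ j) → (e l).repr x j = 0 := by
    intro l j hj
    refine aux_repr_zero (e l) _ (hxV l) ?_
    simp [hj]
  -- Quadratic forms
  have hQB := aux_quad hsymB f β hbig x
  have hQA : ∀ l, ⟪x, Matrix.toEuclideanLin (A l) x⟫ =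
      ((∑ i, α l i * ‖(e l).repr x i‖ ^ 2 : ℝ) : ℂ) :=
    fun l => aux_quad (hsymA l) (e l) (α l) (heig l) x
  -- Sum decomposition
  have hsumT : ⟪x, Matrix.toEuclideanLin (∑ l, A l) x⟫ =
      ∑ l, ⟪x, Matrix.toEuclideanLin (A l) x⟫ := by
    rw [map_sum, LinearMap.sum_apply, inner_sum]
  have hreal : (∑ i, β i * ‖f.repr x i‖ ^ 2 : ℝ) =
      ∑ l, ∑ i, α l i * ‖(e l).repr x i‖ ^ 2 := by
    have : ((∑ i, β i * ‖f.repr x i‖ ^ 2 : ℝ) : ℂ) =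
        ((∑ l, ∑ i, α l i * ‖(e l).repr x i‖ ^ 2 : ℝ) : ℂ) := by
      rw [← hQB, hsumT]
      push_cast
      exact Finset.sum_congr rfl fun l _ => (hQA l).trans (by push_cast; ring_nf)
    exact_mod_cast this
  set N : ℝ := ‖x‖ ^ 2 with hN
  have hNpos : 0 < N := by
    have hxn : ‖x‖ ≠ 0 := norm_ne_zero_iff.2 hx0
    positivity
  -- Lower bound for B
  have hlow : β s * N ≤ ∑ i, β i * ‖f.repr x i‖ ^ 2 := by
    rw [hN, ← aux_parseval f x, Finset.mul_sum]
    refine Finset.sum_le_sum fun i _ => ?_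
    by_cases hi : i ≤ s
    · exact mul_le_mul_of_nonneg_right (hβmono hi) (by positivity)
    · rw [hfz i hi]; simp
  -- Upper bounds for each A l
  have hup : ∀ l, ∑ i, α l i * ‖(e l).repr x i‖ ^ 2 ≤ α l k * N := by
    intro l
    rw [hN, ← aux_parseval (e l) x, Finset.mul_sum]
    refine Finset.sum_le_sum fun i _ => ?_
    by_cases hi : k ≤ i
    · exact mul_le_mul_of_nonneg_right (hαmono l hi) (by positivity)
    · rw [hez l i hi]; simp
  have : β s * N ≤ (∑ l, α l k) * N := by
    calc β s * N ≤ ∑ i, β i * ‖f.repr x i‖ ^ 2 := hlow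
    _ = ∑ l, ∑ i, α l i * ‖(e l).repr x i‖ ^ 2 := hreal
    _ ≤ ∑ l, α l k * N := Finset.sum_le_sum fun l _ => hup l
    _ = (∑ l, α l k) * N := by rw [Finset.sum_mul]
  exact le_of_mul_le_mul_right this hNpos
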